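/- Let K be a compact, perfectly normal topological space and X a real Banach space. If f ∈ C(K,X) with ‖f‖ = 1 is a ρ-left symmetric point of C(K,X), then f(k) = 0 for every k ∈ K with k ∉ M_f. -/

import Mathlib

/-!
Suppose `f k ≠ 0` at a point `k` where `‖f k‖ < 1`, and put `g k = (1 - ‖f k‖) • f k`, so `g ≠ 0`.
For `|t| ≤ 1` the pointwise factor `1 + t (1 - ‖f k‖)` keeps `‖f + t g‖` at most `1`, and `g`
vanishes where `f` attains its norm; hence `‖f + t g‖ = 1` near `t = 0` and `ρ'(f, g) = 0`.
On the other hand `‖g - (‖g‖ / 2) f‖ < ‖g‖`, and since `t ↦ ‖g + t f‖` is convex, a single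
decrease to the left of `0` forces both one-sided derivatives at `0` to be positive, so
`ρ'(g, f) > 0`, contradicting left symmetry.
-/

open Filter Topology Set Metric NormedSpace

noncomputable section

/-- Birkhoff–James orthogonality: `x ⊥_B y` iff `‖x + t • y‖ ≥ ‖x‖` for all real `t`. -/
def BJOrth {E : Type*} [NormedAddCommGroup E] [NormedSpace ℝ E] (x y : E) : Prop :=
  ∀ t : ℝ, ‖x‖ ≤ ‖x + t • y‖

/-- The norm derivative `ρ'₊(x,y) = ‖x‖ · lim_{t→0⁺} (‖x+ty‖-‖x‖)/t`. -/
def rhoPlus {E : Type*} [NormedAddCommGroup E] [NormedSpace ℝ E] (x y : E) : ℝ :=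
  ‖x‖ * limUnder (𝓝[>] (0 : ℝ)) (fun t => (‖x + t • y‖ - ‖x‖) / t)

/-- The norm derivative `ρ'₋(x,y) = ‖x‖ · lim_{t→0⁻} (‖x+ty‖-‖x‖)/t`. -/
def rhoMinus {E : Type*} [NormedAddCommGroup E] [NormedSpace ℝ E] (x y : E) : ℝ :=
  ‖x‖ * limUnder (𝓝[<] (0 : ℝ)) (fun t => (‖x + t • y‖ - ‖x‖) / t)

/-- The norm derivative `ρ'(x,y) = (ρ'₊(x,y) + ρ'₋(x,y))/2`. -/
def rhoDer {E : Type*} [NormedAddCommGroup E] [NormedSpace ℝ E] (x y : E) : ℝ :=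
  (rhoPlus x y + rhoMinus x y) / 2

/-- `x` is an exposed point of the closed unit ball of `E`: there is a norm-one functional `f`
with `f x = 1` and `f u < 1` for every `u` in the ball with `u ≠ x`. -/
def ExposedPt {E : Type*} [NormedAddCommGroup E] [NormedSpace ℝ E] (x : E) : Prop :=
  ‖x‖ ≤ 1 ∧ ∃ f : E →L[ℝ] ℝ, ‖f‖ = 1 ∧ f x = 1 ∧ ∀ u : E, ‖u‖ ≤ 1 → u ≠ x → f u < 1

section NormSlope

variable {E : Type*} [NormedAddCommGroup E] [NormedSpace ℝ E]

def normSlope (x y : E) (t : ℝ) : ℝ := (‖x + t • y‖ - ‖x‖) / t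

lemma convexOn_norm_add_smul (x y : E) : ConvexOn ℝ univ fun t : ℝ => ‖x + t • y‖ := by
  have h := convexOn_univ_norm.comp_affineMap (AffineMap.lineMap x (x + y) : ℝ →ᵃ[ℝ] E)
  rw [preimage_univ] at h
  exact h.congr fun t _ => by simp [AffineMap.lineMap_apply, add_comm]

lemma normSlope_mono {x y : E} {s t : ℝ} (hs : s ≠ 0) (ht : t ≠ 0) (hst : s ≤ t) :
    normSlope x y s ≤ normSlope x y t := by
  simpa [normSlope] using
    (convexOn_norm_add_smul x y).secant_mono (a := 0) trivial trivial trivial hs ht hst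

lemma rhoDer_eq (x y : E) :
    rhoDer x y =
      ‖x‖ * (limUnder (𝓝[>] 0) (normSlope x y) + limUnder (𝓝[<] 0) (normSlope x y)) / 2 := by
  change (‖x‖ * limUnder _ (normSlope x y) + ‖x‖ * limUnder _ (normSlope x y)) / 2 = _
  ring

lemma tendsto_normSlope_nhdsGT (x y : E) :
    Tendsto (normSlope x y) (𝓝[>] 0) (𝓝 (sInf (normSlope x y '' Ioi 0))) :=
  MonotoneOn.tendsto_nhdsGT (fun _ ha _ hb hab => normSlope_mono ha.ne' hb.ne' hab)
    ⟨normSlope x y (-1), forall_mem_image.2 fun t ht =>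
      normSlope_mono (by norm_num) ht.ne' (by linarith [ht.out])⟩

lemma tendsto_normSlope_nhdsLT (x y : E) :
    Tendsto (normSlope x y) (𝓝[<] 0) (𝓝 (sSup (normSlope x y '' Iio 0))) :=
  MonotoneOn.tendsto_nhdsLT (fun _ ha _ hb hab => normSlope_mono ha.ne hb.ne hab)
    ⟨normSlope x y 1, forall_mem_image.2 fun t ht =>
      normSlope_mono ht.ne one_ne_zero (by linarith [ht.out])⟩

lemma normSlope_le_limUnder_nhdsGT {x y : E} {s : ℝ} (hs : s < 0) :
    normSlope x y s ≤ limUnder (𝓝[>] 0) (normSlope x y) := by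
  have h := tendsto_normSlope_nhdsGT x y
  rw [h.limUnder_eq]
  exact ge_of_tendsto h <| eventually_nhdsWithin_of_forall fun t (ht : 0 < t) =>
    normSlope_mono hs.ne ht.ne' (hs.trans ht).le

lemma normSlope_le_limUnder_nhdsLT {x y : E} {s : ℝ} (hs : s < 0) :
    normSlope x y s ≤ limUnder (𝓝[<] 0) (normSlope x y) := by
  have h := tendsto_normSlope_nhdsLT x y
  rw [h.limUnder_eq]
  refine ge_of_tendsto h ?_
  filter_upwards [Ioo_mem_nhdsLT hs] with t ht
  exact normSlope_mono hs.ne ht.2.ne ht.1.le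

lemma limUnder_normSlope_eq_zero {x y : E} {l : Filter ℝ} [l.NeBot] (hl : l ≤ 𝓝 0)
    (h : ∀ᶠ t in 𝓝 (0 : ℝ), ‖x + t • y‖ = ‖x‖) : limUnder l (normSlope x y) = 0 := by
  refine (tendsto_const_nhds.congr' ?_).limUnder_eq
  filter_upwards [hl h] with t ht
  simp [normSlope, ht]

theorem rhoDer_eq_zero_of_eventually_norm_eq {x y : E}
    (h : ∀ᶠ t in 𝓝 (0 : ℝ), ‖x + t • y‖ = ‖x‖) : rhoDer x y = 0 := by
  have hGT := limUnder_normSlope_eq_zero (l := 𝓝[>] 0) nhdsWithin_le_nhds h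
  have hLT := limUnder_normSlope_eq_zero (l := 𝓝[<] 0) nhdsWithin_le_nhds h
  simp [rhoDer_eq, hGT, hLT]

theorem rhoDer_pos_of_norm_add_smul_lt {x y : E} (hx : x ≠ 0) {s : ℝ} (hs : s < 0)
    (hlt : ‖x + s • y‖ < ‖x‖) : 0 < rhoDer x y := by
  have hslope : 0 < normSlope x y s := div_pos_of_neg_of_neg (by linarith) hs
  have hGT := normSlope_le_limUnder_nhdsGT (x := x) (y := y) hs
  have hLT := normSlope_le_limUnder_nhdsLT (x := x) (y := y) hs
  have hx' := norm_pos_iff.2 hx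
  rw [rhoDer_eq]
  nlinarith [mul_pos hx' hslope]

end NormSlope

lemma abs_one_add_mul_one_sub_mul_le_one {a t : ℝ} (ha₀ : 0 ≤ a) (ha₁ : a ≤ 1) (ht : |t| ≤ 1) :
    |1 + t * (1 - a)| * a ≤ 1 := by
  obtain ⟨ht₀, ht₁⟩ := abs_le.1 ht
  rw [abs_of_nonneg (by nlinarith)]
  nlinarith [mul_nonneg (sub_nonneg.2 ht₁) (mul_nonneg ha₀ (sub_nonneg.2 ha₁)), sq_nonneg (1 - a)]

lemma abs_sub_half_mul_lt {a b N : ℝ} (ha : 0 ≤ a) (hb₀ : 0 ≤ b) (hb₁ : b ≤ 1)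
    (hab : a * b ≤ N) (hN : 0 < N) : |a - N / 2| * b < N := by
  rcases le_total (N / 2) a with h | h
  · rw [abs_of_nonneg (by linarith)]
    nlinarith [mul_nonneg hN.le hb₀]
  · rw [abs_of_nonpos (by linarith)]
    nlinarith

section ContinuousMap

variable {K X : Type*} [TopologicalSpace K] [NormedAddCommGroup X]

lemma ContinuousMap.exists_norm_apply_eq_norm [CompactSpace K] [Nonempty K] (f : C(K, X)) :
    ∃ k, ‖f k‖ = ‖f‖ := by
  obtain ⟨k, -, hk⟩ :=
    isCompact_univ.exists_isMaxOn univ_nonempty (map_continuous f).norm.continuousOn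
  exact ⟨k, le_antisymm (f.norm_coe_le_norm k) (f.norm_le_of_nonempty.2 fun j => hk (mem_univ j))⟩

variable [NormedSpace ℝ X]

def oneSubNormSMul (f : C(K, X)) : C(K, X) := ⟨fun k => (1 - ‖f k‖) • f k, by fun_prop⟩

@[simp]
lemma oneSubNormSMul_apply (f : C(K, X)) (k : K) : oneSubNormSMul f k = (1 - ‖f k‖) • f k :=
  rfl

lemma oneSubNormSMul_ne_zero {f : C(K, X)} {k : K} (hk : ‖f k‖ ≠ 1) (hfk : f k ≠ 0) :
    oneSubNormSMul f ≠ 0 := fun h => by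
  have := DFunLike.congr_fun h k
  simp only [oneSubNormSMul_apply, ContinuousMap.zero_apply, smul_eq_zero, sub_eq_zero] at this
  exact this.elim (fun h => hk h.symm) hfk

variable [CompactSpace K]

lemma norm_add_smul_oneSubNormSMul {f : C(K, X)} (hf : ‖f‖ = 1) {t : ℝ} (ht : |t| ≤ 1) :
    ‖f + t • oneSubNormSMul f‖ = 1 := by
  have hK : Nonempty K := by
    by_contra h
    have : ‖f‖ ≤ 0 := (f.norm_le le_rfl).2 fun k => (h ⟨k⟩).elim
    linarith
  have happly (k : K) : (f + t • oneSubNormSMul f) k = (1 + t * (1 - ‖f k‖)) • f k := by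
    simp [add_smul, smul_smul]
  obtain ⟨k₁, hk₁⟩ := f.exists_norm_apply_eq_norm
  refine le_antisymm ((ContinuousMap.norm_le _ zero_le_one).2 fun k => ?_) ?_
  · rw [happly, norm_smul, Real.norm_eq_abs]
    exact abs_one_add_mul_one_sub_mul_le_one (norm_nonneg _) (hf ▸ f.norm_coe_le_norm k) ht
  · calc (1 : ℝ) = ‖(f + t • oneSubNormSMul f) k₁‖ := by simp [happly, hk₁, hf]
      _ ≤ _ := ContinuousMap.norm_coe_le_norm _ k₁

lemma rhoDer_self_oneSubNormSMul {f : C(K, X)} (hf : ‖f‖ = 1) :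
    rhoDer f (oneSubNormSMul f) = 0 :=
  rhoDer_eq_zero_of_eventually_norm_eq <| by
    filter_upwards [Icc_mem_nhds neg_one_lt_zero one_pos] with t ht
    rw [norm_add_smul_oneSubNormSMul hf (abs_le.2 ht), hf]

lemma rhoDer_oneSubNormSMul_self_pos {f : C(K, X)} (hf : ‖f‖ ≤ 1)
    (hg : oneSubNormSMul f ≠ 0) : 0 < rhoDer (oneSubNormSMul f) f := by
  set g := oneSubNormSMul f
  have hN : 0 < ‖g‖ := norm_pos_iff.2 hg
  refine rhoDer_pos_of_norm_add_smul_lt hg (s := -(‖g‖ / 2)) (by linarith)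
    (((g + _ • f).norm_lt_iff hN).2 fun k => ?_)
  have hfk : ‖f k‖ ≤ 1 := (f.norm_coe_le_norm k).trans hf
  have hgk : (1 - ‖f k‖) * ‖f k‖ ≤ ‖g‖ := by
    simpa [g, norm_smul, abs_of_nonneg (sub_nonneg.2 hfk)] using g.norm_coe_le_norm k
  have happly : (g + -(‖g‖ / 2) • f) k = ((1 - ‖f k‖) - ‖g‖ / 2) • f k := by
    rw [ContinuousMap.add_apply, ContinuousMap.smul_apply, oneSubNormSMul_apply, neg_smul,
      ← sub_eq_add_neg]
    simp only [sub_smul]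
  rw [happly, norm_smul, Real.norm_eq_abs]
  exact abs_sub_half_mul_lt (sub_nonneg.2 hfk) (norm_nonneg _) hfk hgk hN

end ContinuousMap

theorem stmt16_general {K X : Type*} [TopologicalSpace K] [CompactSpace K]
    [NormedAddCommGroup X] [NormedSpace ℝ X]
    (f : C(K, X)) (hf : ‖f‖ = 1)
    (hsym : ∀ g : C(K, X), rhoDer f g = 0 → rhoDer g f = 0) :
    ∀ k : K, k ∉ {j : K | ‖f j‖ = ‖f‖} → f k = 0 := by
  intro k hk
  by_contra hfk
  have hg : oneSubNormSMul f ≠ 0 := oneSubNormSMul_ne_zero (by simpa [hf] using hk) hfk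
  exact (rhoDer_oneSubNormSMul_self_pos hf.le hg).ne' (hsym _ (rhoDer_self_oneSubNormSMul hf))

theorem stmt16 {K X : Type*} [TopologicalSpace K] [CompactSpace K] [T2Space K]
    [PerfectlyNormalSpace K]
    [NormedAddCommGroup X] [NormedSpace ℝ X] [CompleteSpace X]
    (f : C(K, X)) (hf : ‖f‖ = 1)
    (hsym : ∀ g : C(K, X), rhoDer f g = 0 → rhoDer g f = 0) :
    ∀ k : K, k ∉ {j : K | ‖f j‖ = ‖f‖} → f k = 0 :=
  stmt16_general f hf hsym
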